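/- For every natural number n, the coefficient of x^n in the formal power series (x/(1 − e^{−x}))^{n+1} · (1 + e^x)^{−1} ∈ ℚ[[x]] equals 2^{−n−1}. -/

import Mathlib

/-!
Write `y = 1 - e^{-x} = x·u`. Then `y' = e^{-x}` and `1 / (1 + e^x) = e^{-x} / (2 - y)`, so the
coefficient in question is the residue of `y' dx / (y^{n+1} (2 - y))`. Expanding `1 / (2 - y)` as a
geometric series in `y` up to order `n`, it suffices that the residue of `y' / y^{k+1}` is `δ_{k0}`;
for `k ≥ 1` this holds because `y' / y^{k+1}` is the derivative of `-y^{-k} / k`.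
-/

open PowerSeries Finset

namespace PowerSeries

theorem derivative_rescale {R : Type*} [CommSemiring R] (a : R) (f : R⟦X⟧) :
    d⁄dX R (rescale a f) = C a * rescale a (d⁄dX R f) := by
  ext n
  simp only [coeff_derivative, coeff_rescale, coeff_C_mul]
  ring

theorem constantCoeff_rescale {R : Type*} [CommSemiring R] (a : R) (f : R⟦X⟧) :
    constantCoeff (rescale a f) = constantCoeff f := by
  rw [← coeff_zero_eq_constantCoeff_apply, coeff_rescale, pow_zero, one_mul,
    coeff_zero_eq_constantCoeff_apply]

theorem derivative_X_mul {R : Type*} [CommSemiring R] (g : R⟦X⟧) :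
    d⁄dX R (X * g) = g + X * d⁄dX R g := by
  rw [Derivation.leibniz, derivative_X, smul_eq_mul, smul_eq_mul, mul_one, add_comm]

section Residue

variable {K : Type*} [Field K] [CharZero K] {g : K⟦X⟧}

theorem coeff_derivative_X_mul_mul_inv_pow (hg : constantCoeff g ≠ 0) (j : ℕ) :
    coeff j (d⁄dX K (X * g) * g⁻¹ ^ (j + 1)) = if j = 0 then 1 else 0 := by
  have hgg : g * g⁻¹ = 1 := PowerSeries.mul_inv_cancel g hg
  rw [derivative_X_mul]
  rcases j with _ | m
  · rw [zero_add, pow_one, add_mul, hgg, mul_assoc, map_add, coeff_zero_X_mul]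
    simp
  · -- `g' * g⁻¹ ^ (m + 2)` is the derivative of `g⁻¹ ^ (m + 1)` divided by `-(m + 1)`
    have hpow : d⁄dX K (g⁻¹ ^ (m + 1)) = C (-((m : K) + 1)) * (d⁄dX K g * g⁻¹ ^ (m + 2)) := by
      rw [derivative_pow, derivative_inv', map_neg, map_add, map_natCast, map_one]
      push_cast
      ring
    have hcoeff := congrArg (coeff m) hpow
    rw [coeff_derivative, coeff_C_mul] at hcoeff
    have hsplit : (g + X * d⁄dX K g) * g⁻¹ ^ (m + 1 + 1)
        = g⁻¹ ^ (m + 1) * (g * g⁻¹) + X * (d⁄dX K g * g⁻¹ ^ (m + 2)) := by ring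
    have hm : (m : K) + 1 ≠ 0 := Nat.cast_add_one_ne_zero m
    rw [hsplit, hgg, mul_one, map_add, coeff_succ_X_mul, if_neg m.succ_ne_zero]
    apply mul_left_cancel₀ hm
    linear_combination hcoeff

theorem coeff_derivative_X_mul_mul_inv_pow_mul_pow (hg : constantCoeff g ≠ 0) (n k : ℕ) :
    coeff n (d⁄dX K (X * g) * g⁻¹ ^ (n + 1) * (X * g) ^ k) = if k = n then 1 else 0 := by
  have hgg : g * g⁻¹ = 1 := PowerSeries.mul_inv_cancel g hg
  rcases le_or_gt k n with hkn | hnk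
  · obtain ⟨j, rfl⟩ := Nat.exists_eq_add_of_le' hkn
    have h : d⁄dX K (X * g) * g⁻¹ ^ (j + k + 1) * (X * g) ^ k
        = d⁄dX K (X * g) * g⁻¹ ^ (j + 1) * (g * g⁻¹) ^ k * X ^ k := by ring
    rw [h, hgg, one_pow, mul_one, coeff_mul_X_pow, coeff_derivative_X_mul_mul_inv_pow hg]
    simp
  · rw [mul_pow, ← mul_assoc, mul_comm _ (g ^ k), ← mul_assoc, coeff_mul_X_pow',
      if_neg (by omega), if_neg (by omega)]

theorem coeff_derivative_X_mul_mul_inv_pow_mul_inv_C_sub (hg : constantCoeff g ≠ 0) {c : K}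
    (hc : c ≠ 0) (n : ℕ) :
    coeff n (d⁄dX K (X * g) * g⁻¹ ^ (n + 1) * (C c - X * g)⁻¹) = c⁻¹ ^ (n + 1) := by
  set Q := (C c - X * g)⁻¹
  have hQ : (C c - X * g) * Q = 1 :=
    PowerSeries.mul_inv_cancel _ (by simpa using hc)
  have hcc : C c * C c⁻¹ = 1 := by rw [← map_mul, mul_inv_cancel₀ hc, map_one]
  have hgeom := mul_neg_geom_sum (C c⁻¹ * (X * g)) (n + 1)
  have hexpand : Q = C c⁻¹ * ∑ k ∈ range (n + 1), (C c⁻¹ * (X * g)) ^ k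
      + (C c⁻¹ * g) ^ (n + 1) * Q * X ^ (n + 1) := by
    linear_combination (-Q) * hgeom + (C c⁻¹ * ∑ k ∈ range (n + 1), (C c⁻¹ * (X * g)) ^ k) * hQ
      - (Q * ∑ k ∈ range (n + 1), (C c⁻¹ * (X * g)) ^ k) * hcc
  have hterm (k : ℕ) :
      coeff n (d⁄dX K (X * g) * g⁻¹ ^ (n + 1) * (C c⁻¹ * (C c⁻¹ * (X * g)) ^ k)) =
        c⁻¹ ^ (k + 1) * if k = n then 1 else 0 := by
    rw [← coeff_derivative_X_mul_mul_inv_pow_mul_pow hg n k, ← coeff_C_mul, mul_pow, ← map_pow]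
    congr 1
    rw [pow_succ' c⁻¹, map_mul C]
    ring
  rw [hexpand, mul_add, map_add, mul_sum, mul_sum, map_sum,
    Finset.sum_congr rfl fun k _ => hterm k, ← mul_assoc, coeff_mul_X_pow', if_neg (by omega),
    add_zero]
  simp

end Residue

theorem inv_one_add_exp (K : Type*) [Field K] [Algebra ℚ K] :
    (1 + exp K)⁻¹ = rescale (-1) (exp K) * (1 + rescale (-1) (exp K))⁻¹ := by
  have := algebraRat.charZero K
  have hE : constantCoeff (1 + exp K) ≠ 0 := by simp
  have hM : constantCoeff (1 + rescale (-1) (exp K)) ≠ 0 := by simp [constantCoeff_rescale]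
  have hEM : exp K * rescale (-1) (exp K) = 1 := exp_mul_exp_neg_eq_one
  rw [eq_mul_inv_iff_mul_eq hM]
  linear_combination (-(1 + exp K)⁻¹) * hEM
    + rescale (-1) (exp K) * PowerSeries.inv_mul_cancel _ hE

end PowerSeries

/-- In `ℚ[[x]]`, for every `n`, the coefficient of `x^n` in
`(x/(1 − e^{−x}))^{n+1} · (1 + eˣ)⁻¹` equals `2^{−n−1}`.  Here `u` is the unit with
`x·u = 1 − e^{−x}`, so that `x/(1 − e^{−x}) = u⁻¹` (used in Theorem 4.1 of the paper
to evaluate Euler pairings of spinor bundles). -/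
theorem stmt_9 (u : PowerSeries ℚ)
    (hu : PowerSeries.X * u = 1 - PowerSeries.rescale (-1) (PowerSeries.exp ℚ))
    (n : ℕ) :
    PowerSeries.coeff n ((u⁻¹) ^ (n+1) * (1 + PowerSeries.exp ℚ)⁻¹)
      = 1 / 2 ^ (n+1) := by
  have hu0 : constantCoeff u ≠ 0 := by
    have h := congrArg (coeff 1) hu
    rw [coeff_succ_X_mul, coeff_zero_eq_constantCoeff_apply] at h
    simp [h, coeff_rescale, coeff_exp]
  have hy' : d⁄dX ℚ (X * u) = rescale (-1) (exp ℚ) := by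
    rw [hu, map_sub, derivative_one, derivative_rescale, derivative_exp]
    simp
  have hy : 1 + rescale (-1) (exp ℚ) = C 2 - X * u := by
    rw [hu, map_ofNat C 2]
    ring
  rw [inv_one_add_exp, hy, ← hy', ← mul_assoc, mul_comm (u⁻¹ ^ (n + 1)),
    coeff_derivative_X_mul_mul_inv_pow_mul_inv_C_sub hu0 two_ne_zero, inv_pow, one_div]
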